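/- A normal λ-term has type N = ∀X{X, (X→X) → X} in the second-order propositional type system (system F) if and only if it is a Church numeral n̲ = λx λf (f)ⁿx for some natural number n. -/

import Mathlib

/- Untyped λ-calculus with de Bruijn indices, head reduction, Church numerals. -/

inductive Lam : Type
  | var : ℕ → Lam
  | app : Lam → Lam → Lam
  | lam : Lam → Lam
deriving DecidableEq, Repr

namespace Lam

/-- Shift free variables `≥ c` up by 1. -/
def lift (c : ℕ) : Lam → Lam
  | var n => if n < c then var n else var (n + 1)
  | app s t => app (s.lift c) (t.lift c)
  | lam t => lam (t.lift (c + 1))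

/-- Push a substitution under a binder. -/
def up (σ : ℕ → Lam) : ℕ → Lam
  | 0 => var 0
  | n + 1 => (σ n).lift 0

/-- Capture-avoiding simultaneous substitution. -/
def subst (σ : ℕ → Lam) : Lam → Lam
  | var n => σ n
  | app s t => app (s.subst σ) (t.subst σ)
  | lam t => lam (t.subst (up σ))

/-- `t.subst0 u` is `t[u/0]`, the β-contractum substitution. -/
def subst0 (t u : Lam) : Lam :=
  t.subst (fun n => match n with | 0 => u | n + 1 => var n)

/-- `m` occurs free in the term. -/
def FreeIn (m : ℕ) : Lam → Prop
  | var n => n = m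
  | app s t => s.FreeIn m ∨ t.FreeIn m
  | lam t => t.FreeIn (m + 1)

/-- A closed λ-term. -/
def Closed (t : Lam) : Prop := ∀ m, ¬ t.FreeIn m

end Lam

/-- One-step β-reduction (anywhere in the term). -/
inductive Beta : Lam → Lam → Prop
  | beta (t u) : Beta (.app (.lam t) u) (t.subst0 u)
  | appL {s s'} (t) : Beta s s' → Beta (.app s t) (.app s' t)
  | appR {t t'} (s) : Beta t t' → Beta (.app s t) (.app s t')
  | lam {t t'} : Beta t t' → Beta (.lam t) (.lam t')

/-- β-equivalence `≃β`. -/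
def BetaEq : Lam → Lam → Prop := Relation.EqvGen Beta

/-- A term in (β-)normal form. -/
def NormalForm (t : Lam) : Prop := ∀ u, ¬ Beta t u

/-- One step of head reduction: reduce the head redex. -/
inductive HStep : Lam → Lam → Prop
  | beta (t u) : HStep (.app (.lam t) u) (t.subst0 u)
  | lam {t t'} : HStep t t' → HStep (.lam t) (.lam t')
  | app {t t'} (u) : HStep t t' → (∀ s, t ≠ .lam s) → HStep (.app t u) (.app t' u)

/-- `HRedN k u v` : `u ≻ v` by a head reduction of length `h(u,v) = k`. -/
inductive HRedN : ℕ → Lam → Lam → Prop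
  | refl (t) : HRedN 0 t t
  | step {k t u v} : HStep t u → HRedN k u v → HRedN (k + 1) t v

/-- `u ≻ v` : `v` is obtained from `u` by head reduction. -/
def HRed (t u : Lam) : Prop := ∃ k, HRedN k t u

/-- Head normal form: no head redex. -/
def HeadNormal (t : Lam) : Prop := ∀ u, ¬ HStep t u

/-- Solvable: the head reduction terminates. -/
def Solvable (t : Lam) : Prop := ∃ v, HRed t v ∧ HeadNormal v

/-- `(t)u₁…uₙ` : iterated application. -/
def appList : Lam → List Lam → Lam
  | t, [] => t
  | t, u :: us => appList (t.app u) us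

/-- `(f)ⁿ x` with `x = var 1`, `f = var 0`. -/
def churchBody : ℕ → Lam
  | 0 => .var 1
  | n + 1 => .app (.var 0) (churchBody n)

/-- Church numeral `n̲ = λx λf (f)ⁿ x`. -/
def church (n : ℕ) : Lam := .lam (.lam (churchBody n))

/-- `0̲ = λx λf x`. -/
def czero : Lam := .lam (.lam (.var 1))

/-- `s̲ = λn λx λf (f)((n)x)f`. -/
def csucc : Lam := .lam (.lam (.lam (.app (.var 0) (.app (.app (.var 2) (.var 1)) (.var 0)))))

/-- `(s̲)ⁿ 0̲`. -/
def succIter : ℕ → Lam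
  | 0 => czero
  | n + 1 => .app csucc (succIter n)

/-- `G = λx λy (x) λz (y)(s̲)z`. -/
def Gop : Lam := .lam (.lam (.app (.var 1) (.lam (.app (.var 1) (.app csucc (.var 0))))))

/-- `δ = λf (f)0̲`. -/
def deltaOp : Lam := .lam (.app (.var 0) czero)

/-- `T₁ = λn ((n)δ)G`. -/
def T1 : Lam := .lam (.app (.app (.var 0) deltaOp) Gop)

/-- `F = λx λy (x)(s̲)y`. -/
def Fop : Lam := .lam (.lam (.app (.var 1) (.app csucc (.var 0))))

/-- `T₂ = λn λf (((n)f)F)0̲`. -/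
def T2 : Lam := .lam (.lam (.app (.app (.app (.var 1) (.var 0)) Fop) czero))

/-- `θ₀ = λx λf λz (x)(λd z)(λx x)`. -/
def theta0 : Lam := .lam (.lam (.lam (.app (.app (.var 2) (.lam (.var 1))) (.lam (.var 0)))))

/-- `T` is a storage operator for the integers (the fixed variable `f` is `var 0`). -/
def IsStorage (T : Lam) : Prop :=
  ∀ n : ℕ, ∃ τ : Lam, BetaEq τ (church n) ∧
    ∀ θ : Lam, BetaEq θ (church n) →
      ∃ σ : ℕ → Lam, HRed (.app (.app T θ) (.var 0)) (.app (.var 0) (τ.subst σ))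

/- The propositional (second-order) type systems F and F⊥. -/

/-- Propositional types: named propositional variables `(b, X)` with
`b = true` marking ⊥-variables. -/
inductive PTy : Type
  | pv (b : Bool) (X : ℕ)
  | arr (A B : PTy)
  | all (b : Bool) (X : ℕ) (A : PTy)
deriving DecidableEq

/-- `⊥ := ∀X X`. -/
def botP : PTy := .all false 0 (.pv false 0)

/-- `¬A := A → ⊥`. -/
def negP (A : PTy) : PTy := A.arr botP

namespace PTy

/-- The variable `(b, X)` occurs free. -/
def fv (b : Bool) (X : ℕ) : PTy → Prop
  | pv b' X' => b = b' ∧ X = X'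
  | arr A B => A.fv b X ∨ B.fv b X
  | all b' X' A => ¬(b = b' ∧ X = X') ∧ A.fv b X

/-- `A[G/X]` : substitute `G` for the propositional variable `(b, X)`. -/
def substT (b : Bool) (X : ℕ) (G : PTy) : PTy → PTy
  | pv b' X' => if b = b' ∧ X = X' then G else pv b' X'
  | arr A B => arr (substT b X G A) (substT b X G B)
  | all b' X' A =>
      if b = b' ∧ X = X' then all b' X' A else all b' X' (substT b X G A)

end PTy

/-- ⊥-types: types whose final target is `⊥` or an atom `X_⊥`. -/
inductive IsBotP : PTy → Prop
  | bot : IsBotP botP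
  | pv (X) : IsBotP (.pv true X)
  | arr (A) {B} : IsBotP B → IsBotP (.arr A B)
  | all (b X) {A} : IsBotP A → IsBotP (.all b X A)

/-- Typing in system F (`strict = false`) and in its extension F⊥
(`strict = true`, where ⊥-variables may only be instantiated by ⊥-types). -/
inductive PDer (strict : Bool) : List PTy → Lam → PTy → Prop
  | var (Γ n A) : Γ[n]? = some A → PDer strict Γ (.var n) A
  | lamI {Γ A t B} : PDer strict (A :: Γ) t B → PDer strict Γ (.lam t) (.arr A B)
  | appE {Γ u v A B} : PDer strict Γ u (.arr A B) → PDer strict Γ v A →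
      PDer strict Γ (.app u v) B
  | allI {Γ t A} (b X) : PDer strict Γ t A → (∀ B ∈ Γ, ¬ B.fv b X) →
      PDer strict Γ t (.all b X A)
  | allE {Γ t b X A} (G) : PDer strict Γ t (.all b X A) →
      (strict = true → b = true → IsBotP G) → PDer strict Γ t (PTy.substT b X G A)

/-- `N = ∀X{X, (X→X) → X}`. -/
def Npty : PTy :=
  .all false 0 ((PTy.pv false 0).arr (((PTy.pv false 0).arr (.pv false 0)).arr (.pv false 0)))

/-- `N^⊥ = ∀X_⊥{X_⊥, (X_⊥→X_⊥) → X_⊥}`. -/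
def NbotP : PTy :=
  .all true 0 ((PTy.pv true 0).arr (((PTy.pv true 0).arr (.pv true 0)).arr (.pv true 0)))

/-- The instantiation preorder `⊴` of F⊥: least reflexive transitive relation
with `∀X A ⊴ A[G/X]` (`G` a ⊥-type when `X` is a ⊥-variable). -/
inductive InstLe : PTy → PTy → Prop
  | refl (A) : InstLe A A
  | trans {A B C} : InstLe A B → InstLe B C → InstLe A C
  | all {b X A} (G) : (b = true → IsBotP G) → InstLe (.all b X A) (PTy.substT b X G A)

/-!
The rules `∀I` and `∀E` do not change the term, so every type of a term is reachable by `∀`-steps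
from the type given by the syntax-directed rule at the bottom of its derivation. From an arrow
only quantified instances of arrows are reachable, and from a type variable free in the context
only quantified copies of itself. Hence, in a context of types `X` and `X → Y`, a normal term is
an abstraction, a variable, or a variable applied to one argument. A closed normal term of type
`N` is therefore `λx λf u`, where `x` and `u` have type variables and `f` has a type `Y` or
`Y → Z` different from that of `u`; such a `u` can only be `(f)ⁿ x`.
-/

namespace PTy

theorem substT_pv_self (b : Bool) (X : ℕ) : ∀ A : PTy, substT b X (pv b X) A = A
  | pv b' X' => by by_cases h : b = b' ∧ X = X' <;> simp_all [substT]
  | arr A B => by simp [substT, substT_pv_self b X A, substT_pv_self b X B]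
  | all b' X' A => by by_cases h : b = b' ∧ X = X' <;> simp_all [substT, substT_pv_self b X A]

theorem substT_eq_self {b : Bool} {X : ℕ} {G : PTy} : ∀ {A : PTy}, ¬ A.fv b X → substT b X G A = A
  | pv b' X', h => by simp_all [fv, substT]
  | arr A B, h => by
      simp only [fv, not_or] at h
      simp [substT, substT_eq_self h.1, substT_eq_self h.2]
  | all b' X' A, h => by
      by_cases hb : b = b' ∧ X = X'
      · simp [substT, hb]
      · simp only [fv, hb, not_false_eq_true, true_and] at h
        simp [substT, hb, substT_eq_self h]

/-- Successive substitutions `(b, X, G)`, applied from the head of the list. -/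
def substList (π : List (Bool × ℕ × PTy)) (A : PTy) : PTy :=
  π.foldl (fun D o => substT o.1 o.2.1 o.2.2 D) A

def allList (L : List (Bool × ℕ)) (A : PTy) : PTy :=
  L.foldr (fun p D => all p.1 p.2 D) A

@[simp]
theorem allList_nil (A : PTy) : allList [] A = A := rfl

@[simp]
theorem allList_cons (p : Bool × ℕ) (L : List (Bool × ℕ)) (A : PTy) :
    allList (p :: L) A = all p.1 p.2 (allList L A) := rfl

@[simp]
theorem substList_cons (o : Bool × ℕ × PTy) (π : List (Bool × ℕ × PTy)) (A : PTy) :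
    substList (o :: π) A = substList π (substT o.1 o.2.1 o.2.2 A) := rfl

theorem substList_append (π₁ π₂ : List (Bool × ℕ × PTy)) (A : PTy) :
    substList (π₁ ++ π₂) A = substList π₂ (substList π₁ A) := by
  simp [substList, List.foldl_append]

@[simp]
theorem substList_arr (π : List (Bool × ℕ × PTy)) (A B : PTy) :
    substList π (arr A B) = arr (substList π A) (substList π B) := by
  induction π generalizing A B with
  | nil => rfl
  | cons o π ih => simp [substT, ih]

theorem exists_substList_all (π : List (Bool × ℕ × PTy)) (b : Bool) (X : ℕ) (A : PTy) :
    ∃ A', substList π (all b X A) = all b X A' := by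
  induction π generalizing A with
  | nil => exact ⟨A, rfl⟩
  | cons o π ih =>
      by_cases h : o.1 = b ∧ o.2.1 = X
      · simpa [substT, h] using ih A
      · simpa [substT, h] using ih (substT o.1 o.2.1 o.2.2 A)

theorem substList_eq_self {π : List (Bool × ℕ × PTy)} {A : PTy}
    (h : ∀ o ∈ π, ¬ A.fv o.1 o.2.1) : substList π A = A := by
  induction π with
  | nil => rfl
  | cons o π ih =>
      rw [substList_cons, substT_eq_self (h o List.mem_cons_self)]
      exact ih fun o' ho' => h o' (List.mem_cons_of_mem _ ho')

theorem exists_eq_pv_of_substList_eq_pv {π : List (Bool × ℕ × PTy)} {A : PTy} {b : Bool}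
    {X : ℕ} (h : substList π A = pv b X) : ∃ b' X', A = pv b' X' := by
  cases A with
  | pv b' X' => exact ⟨b', X', rfl⟩
  | arr A B => simp at h
  | all b' X' A =>
      obtain ⟨A', hA'⟩ := exists_substList_all π b' X' A
      rw [hA'] at h
      cases h

theorem eq_nil_of_substList_allList_eq_arr {π : List (Bool × ℕ × PTy)} {L : List (Bool × ℕ)}
    {A E F : PTy} (h : substList π (allList L A) = arr E F) : L = [] := by
  cases L with
  | nil => rfl
  | cons p L =>
      obtain ⟨A', hA'⟩ := exists_substList_all π p.1 p.2 (allList L A)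
      rw [allList_cons, hA'] at h
      cases h

theorem substT_allList (b : Bool) (X : ℕ) (G : PTy) :
    ∀ (L : List (Bool × ℕ)) (A : PTy),
      substT b X G (allList L A) = allList L A ∨
      substT b X G (allList L A) = allList L (substT b X G A)
  | [], A => Or.inr rfl
  | (b', X') :: L, A => by
      by_cases h : b = b' ∧ X = X'
      · simp [allList, substT, h]
      · simpa [allList, substT, h] using substT_allList b X G L A

inductive IsFlat : PTy → Prop
  | pv (b X) : IsFlat (pv b X)
  | arr (b X b' X') : IsFlat (arr (pv b X) (pv b' X'))

theorem isFlat_of_substList_eq {π : List (Bool × ℕ × PTy)} {A : PTy} {b b' : Bool} {X X' : ℕ}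
    (h : substList π A = arr (pv b X) (pv b' X')) : A.IsFlat := by
  cases A with
  | pv b X => exact .pv b X
  | arr P Q =>
      simp only [substList_arr, arr.injEq] at h
      obtain ⟨c, Y, rfl⟩ := exists_eq_pv_of_substList_eq_pv h.1
      obtain ⟨c', Y', rfl⟩ := exists_eq_pv_of_substList_eq_pv h.2
      exact .arr c Y c' Y'
  | all c Y A =>
      obtain ⟨A', hA'⟩ := exists_substList_all π c Y A
      rw [hA'] at h
      cases h

def FreshIn (Γ : List PTy) (b : Bool) (X : ℕ) : Prop := ∀ B ∈ Γ, ¬ B.fv b X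

theorem substList_pv_of_not_freshIn {Γ : List PTy} {π : List (Bool × ℕ × PTy)} {b : Bool}
    {X : ℕ} (hπ : ∀ o ∈ π, FreshIn Γ o.1 o.2.1) (hX : ¬ FreshIn Γ b X) :
    substList π (pv b X) = pv b X :=
  substList_eq_self fun o ho ⟨hb, hX'⟩ => hX (hb ▸ hX' ▸ hπ o ho)

/-- The effect on the type of the rules `∀I` and `∀E`, which leave the term unchanged. -/
inductive QuantStep (Γ : List PTy) : PTy → PTy → Prop
  | inst (b X G A) : QuantStep Γ (all b X A) (substT b X G A)
  | gen (b X A) : FreshIn Γ b X → QuantStep Γ A (all b X A)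

def QuantReach (Γ : List PTy) : PTy → PTy → Prop := Relation.ReflTransGen (QuantStep Γ)

namespace QuantReach

variable {Γ : List PTy}

theorem eq_allList_substList {A D : PTy}
    (hA : ∀ π : List (Bool × ℕ × PTy), (∀ o ∈ π, FreshIn Γ o.1 o.2.1) →
      ∀ b X B, substList π A ≠ all b X B)
    (h : QuantReach Γ A D) :
    ∃ (π : List (Bool × ℕ × PTy)) (L : List (Bool × ℕ)), (∀ o ∈ π, FreshIn Γ o.1 o.2.1) ∧
      (∀ p ∈ L, FreshIn Γ p.1 p.2) ∧ D = allList L (substList π A) := by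
  induction h with
  | refl => exact ⟨[], [], by simp, by simp, rfl⟩
  | tail _ step ih =>
      obtain ⟨π, L, hπ, hL, hmid⟩ := ih
      cases step with
      | gen b X _ hX =>
          refine ⟨π, (b, X) :: L, hπ, ?_, by rw [hmid]; rfl⟩
          simpa [hX] using hL
      | inst b X G B =>
          obtain _ | ⟨p, L⟩ := L
          · exact absurd hmid.symm (hA π hπ b X B)
          obtain ⟨rfl, rfl, rfl⟩ : b = p.1 ∧ X = p.2 ∧ B = allList L (substList π A) := by
            simpa [allList] using hmid
          have hL' : ∀ q ∈ L, FreshIn Γ q.1 q.2 := fun q hq => hL q (List.mem_cons_of_mem _ hq)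
          rcases substT_allList p.1 p.2 G L (substList π A) with h | h
          · exact ⟨π, L, hπ, hL', h⟩
          · refine ⟨π ++ [(p.1, p.2, G)], L, ?_, hL', by rw [h, substList_append]; rfl⟩
            intro o ho
            rcases List.mem_append.1 ho with ho | ho
            · exact hπ o ho
            · obtain rfl := List.mem_singleton.1 ho
              exact hL p List.mem_cons_self

theorem of_arr {A B D : PTy} (h : QuantReach Γ (arr A B) D) :
    ∃ (π : List (Bool × ℕ × PTy)) (L : List (Bool × ℕ)), (∀ o ∈ π, FreshIn Γ o.1 o.2.1) ∧
      D = allList L (arr (substList π A) (substList π B)) := by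
  obtain ⟨π, L, hπ, -, rfl⟩ := h.eq_allList_substList (fun π _ b X C => by simp)
  exact ⟨π, L, hπ, by simp⟩

theorem of_pv {b : Bool} {X : ℕ} {D : PTy} (hX : ¬ FreshIn Γ b X) (h : QuantReach Γ (pv b X) D) :
    ∃ L : List (Bool × ℕ), D = allList L (pv b X) := by
  obtain ⟨π, L, hπ, -, rfl⟩ := h.eq_allList_substList
    (fun π hπ b' X' C => by simp [substList_pv_of_not_freshIn hπ hX])
  exact ⟨L, by rw [substList_pv_of_not_freshIn hπ hX]⟩

theorem not_arr_pv {A B : PTy} {b : Bool} {X : ℕ} : ¬ QuantReach Γ (arr A B) (pv b X) := by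
  intro h
  obtain ⟨π, _ | _, -, h⟩ := h.of_arr <;> cases h

theorem not_pv_arr {b : Bool} {X : ℕ} {E F : PTy} (hX : ¬ FreshIn Γ b X) :
    ¬ QuantReach Γ (pv b X) (arr E F) := by
  intro h
  obtain ⟨_ | _, h⟩ := h.of_pv hX <;> cases h

theorem pv_eq {b b' : Bool} {X X' : ℕ} (hX : ¬ FreshIn Γ b X)
    (h : QuantReach Γ (pv b X) (pv b' X')) : pv b X = pv b' X' := by
  obtain ⟨_ | _, h⟩ := h.of_pv hX <;> cases h
  rfl

theorem eq_of_isFlat {A E F : PTy} (hA : A.IsFlat) (hΓ : A ∈ Γ)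
    (h : QuantReach Γ A (arr E F)) : A = arr E F := by
  cases hA with
  | pv b X => exact absurd h (not_pv_arr fun hf => hf _ hΓ ⟨rfl, rfl⟩)
  | arr b X b' X' =>
      obtain ⟨π, L, hπ, hEF⟩ := h.of_arr
      obtain rfl : L = [] := by cases L <;> first | rfl | cases hEF
      rw [substList_pv_of_not_freshIn hπ fun hf => hf _ hΓ (.inl ⟨rfl, rfl⟩),
        substList_pv_of_not_freshIn hπ fun hf => hf _ hΓ (.inr ⟨rfl, rfl⟩)] at hEF
      exact hEF.symm

end QuantReach

end PTy

open PTy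

/-- Derivations ending with a syntax-directed rule. -/
inductive SynDer (s : Bool) (Γ : List PTy) : Lam → PTy → Prop
  | var (n A) : Γ[n]? = some A → SynDer s Γ (.var n) A
  | app {u v E B} : PDer s Γ u (.arr E B) → PDer s Γ v E → SynDer s Γ (.app u v) B
  | lam {w A B} : PDer s (A :: Γ) w B → SynDer s Γ (.lam w) (.arr A B)

namespace PDer

variable {s : Bool} {Γ : List PTy}

theorem exists_synDer {t : Lam} {C : PTy} (h : PDer s Γ t C) :
    ∃ C₀, SynDer s Γ t C₀ ∧ QuantReach Γ C₀ C := by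
  induction h with
  | var Γ n A hA => exact ⟨A, .var n A hA, .refl⟩
  | lamI h _ => exact ⟨_, .lam h, .refl⟩
  | appE hu hv _ _ => exact ⟨_, .app hu hv, .refl⟩
  | allI b X _ hX ih =>
      obtain ⟨C₀, h₀, hr⟩ := ih
      exact ⟨C₀, h₀, hr.tail (.gen b X _ hX)⟩
  | allE G _ _ ih =>
      obtain ⟨C₀, h₀, hr⟩ := ih
      exact ⟨C₀, h₀, hr.tail (.inst _ _ G _)⟩

theorem var_inv {n : ℕ} {C : PTy} (h : PDer s Γ (.var n) C) :
    ∃ A, Γ[n]? = some A ∧ QuantReach Γ A C := by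
  obtain ⟨C₀, ⟨⟩, hr⟩ := h.exists_synDer
  exact ⟨C₀, ‹_›, hr⟩

theorem app_inv {u v : Lam} {C : PTy} (h : PDer s Γ (.app u v) C) :
    ∃ E B, PDer s Γ u (.arr E B) ∧ PDer s Γ v E ∧ QuantReach Γ B C := by
  obtain ⟨C₀, h₀, hr⟩ := h.exists_synDer
  cases h₀ with
  | app hu hv => exact ⟨_, C₀, hu, hv, hr⟩

theorem lam_inv {w : Lam} {C : PTy} (h : PDer s Γ (.lam w) C) :
    ∃ A B, PDer s (A :: Γ) w B ∧ QuantReach Γ (.arr A B) C := by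
  obtain ⟨C₀, h₀, hr⟩ := h.exists_synDer
  cases h₀ with
  | lam hw => exact ⟨_, _, hw, hr⟩

theorem lam_arr_inv {w : Lam} {C D : PTy} (h : PDer s Γ (.lam w) (.arr C D)) :
    ∃ A B π, PDer s (A :: Γ) w B ∧ C = substList π A ∧ D = substList π B := by
  obtain ⟨A, B, hw, hr⟩ := h.lam_inv
  obtain ⟨π, L, -, hCD⟩ := hr.of_arr
  obtain rfl : L = [] := by cases L <;> first | rfl | cases hCD
  obtain ⟨rfl, rfl⟩ := arr.inj hCD
  exact ⟨A, B, π, hw, rfl, rfl⟩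

theorem of_all {t : Lam} {b : Bool} {X : ℕ} {A : PTy} (h : PDer s Γ t (.all b X A)) :
    PDer s Γ t A := by
  simpa [substT_pv_self] using h.allE (.pv b X) (fun _ hb => hb ▸ .pv X)

theorem normal_cases (hΓ : ∀ A ∈ Γ, A.IsFlat) {t : Lam} (ht : NormalForm t) {D : PTy}
    (h : PDer s Γ t D) :
    (∃ w, t = .lam w) ∨ (∃ n A, t = .var n ∧ Γ[n]? = some A ∧ QuantReach Γ A D) ∨
      ∃ n P Q u, t = .app (.var n) u ∧ Γ[n]? = some (.arr P Q) ∧ PDer s Γ u P ∧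
        QuantReach Γ Q D := by
  induction t generalizing D with
  | var n =>
      obtain ⟨A, hA, hr⟩ := h.var_inv
      exact .inr (.inl ⟨n, A, rfl, hA, hr⟩)
  | lam w => exact .inl ⟨w, rfl⟩
  | app u v ihu _ =>
      obtain ⟨E, B, hu, hv, hr⟩ := h.app_inv
      have hu_nf : NormalForm u := fun u' hu' => ht _ (.appL v hu')
      rcases ihu hu_nf hu with ⟨w, rfl⟩ | ⟨n, A, rfl, hA, hrA⟩ | ⟨n, P, Q, u, rfl, hPQ, -, hrQ⟩
      · exact absurd (Beta.beta w v) (ht _)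
      · have hAΓ : A ∈ Γ := List.mem_of_getElem? hA
        obtain rfl := hrA.eq_of_isFlat (hΓ A hAΓ) hAΓ
        exact .inr (.inr ⟨n, E, B, v, rfl, hA, hv, hr⟩)
      · have hPQΓ : P.arr Q ∈ Γ := List.mem_of_getElem? hPQ
        obtain ⟨-, -, c, Y⟩ := hΓ _ hPQΓ
        exact absurd hrQ (QuantReach.not_pv_arr fun hf => hf _ hPQΓ (.inr ⟨rfl, rfl⟩))

end PDer

theorem NormalForm.of_lam {t : Lam} (h : NormalForm (.lam t)) : NormalForm t :=
  fun u hu => h (.lam u) (.lam hu)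

theorem NormalForm.of_app_right {s t : Lam} (h : NormalForm (.app s t)) : NormalForm t :=
  fun u hu => h (.app s u) (.appR s hu)

theorem pDer_churchBody (s : Bool) (n : ℕ) :
    PDer s [(PTy.pv false 0).arr (.pv false 0), .pv false 0] (churchBody n) (.pv false 0) := by
  induction n with
  | zero => exact .var _ 1 _ rfl
  | succ n ih => exact .appE (.var _ 0 _ rfl) ih

theorem pDer_church (s : Bool) (n : ℕ) : PDer s [] (church n) Npty :=
  .allI false 0 (.lamI (.lamI (pDer_churchBody s n))) (by simp)

/-- `A` is the type of `f`. The hypothesis `A ≠ X'` rules out `u = f`, and it passes to the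
argument of `f` when `A = Y → Z`, since that argument has the type `Y`. -/
theorem exists_eq_churchBody {s : Bool} {A : PTy} {b b' : Bool} {X X' : ℕ} (hA : A.IsFlat)
    {u : Lam} (hu : NormalForm u) (h : PDer s [A, .pv b X] u (.pv b' X'))
    (hne : A ≠ .pv b' X') : ∃ n, u = churchBody n := by
  have hΓ : ∀ B ∈ [A, .pv b X], B.IsFlat := by simpa using ⟨hA, .pv b X⟩
  induction u generalizing b' X' with
  | lam w =>
      obtain ⟨C, D, -, hr⟩ := h.lam_inv
      exact absurd hr QuantReach.not_arr_pv
  | var n =>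
      obtain ⟨B, hB, hr⟩ := h.var_inv
      match n, hB with
      | 0, hB =>
          obtain rfl : B = A := by simpa using hB.symm
          cases hA with
          | pv c Y =>
              exact absurd (hr.pv_eq fun hf => hf (.pv c Y) List.mem_cons_self ⟨rfl, rfl⟩) hne
          | arr => exact absurd hr QuantReach.not_arr_pv
      | 1, _ => exact ⟨0, rfl⟩
  | app t w _ ihw =>
      rcases PDer.normal_cases hΓ hu h with ⟨_, ⟨⟩⟩ | ⟨_, _, ⟨⟩, -⟩ |
        ⟨n, P, Q, u, he, hPQ, hu', -⟩
      obtain ⟨rfl, rfl⟩ := Lam.app.inj he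
      match n, hPQ with
      | 0, hPQ =>
          obtain rfl : A = P.arr Q := by simpa using hPQ
          obtain ⟨c, Y, -, -⟩ := hA
          obtain ⟨n, rfl⟩ := ihw hu.of_app_right hu' (by simp)
          exact ⟨n + 1, rfl⟩
      | 1, hPQ => simp at hPQ

theorem exists_eq_lam_of_nil {s : Bool} {t : Lam} (ht : NormalForm t) {C : PTy}
    (h : PDer s [] t C) : ∃ w, t = .lam w := by
  rcases h.normal_cases (by simp) ht with h | ⟨n, A, -, hn, -⟩ | ⟨n, P, Q, u, -, hn, -⟩
  · exact h
  all_goals simp at hn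

theorem exists_eq_lam_churchBody {s : Bool} {π : List (Bool × ℕ × PTy)} {b c : Bool} {Y Z : ℕ}
    {t : Lam} (ht : NormalForm t) {B : PTy} (h : PDer s [.pv b Y] t B)
    (hY : substList π (.pv b Y) = .pv c Z)
    (hB : substList π B = ((PTy.pv c Z).arr (.pv c Z)).arr (.pv c Z)) :
    ∃ n, t = .lam (churchBody n) := by
  have hΓ : ∀ A ∈ [PTy.pv b Y], A.IsFlat := by simpa using .pv b Y
  have hYΓ : ¬ FreshIn [.pv b Y] b Y := fun hf => hf (.pv b Y) List.mem_cons_self ⟨rfl, rfl⟩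
  rcases h.normal_cases hΓ ht with ⟨t', rfl⟩ | ⟨n, A, rfl, hn, hr⟩ | ⟨n, P, Q, u, rfl, hn, -⟩
  · obtain ⟨A', B', ht', hr⟩ := h.lam_inv
    obtain ⟨ρ, L, -, rfl⟩ := hr.of_arr
    obtain rfl := eq_nil_of_substList_allList_eq_arr hB
    rw [allList_nil, substList_arr, ← substList_append, ← substList_append] at hB
    obtain ⟨hA', hB'⟩ := arr.inj hB
    obtain ⟨c', Z', rfl⟩ := exists_eq_pv_of_substList_eq_pv hB'
    obtain ⟨n, rfl⟩ := exists_eq_churchBody (isFlat_of_substList_eq hA') ht.of_lam ht'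
      (by rintro rfl; rw [hB'] at hA'; cases hA')
    exact ⟨n, rfl⟩
  · match n, hn with
    | 0, hn =>
        obtain rfl : A = .pv b Y := by simpa using hn.symm
        obtain ⟨L, rfl⟩ := hr.of_pv hYΓ
        obtain rfl := eq_nil_of_substList_allList_eq_arr hB
        rw [allList_nil, hY] at hB
        cases hB
  · match n, hn with
    | 0, hn => simp at hn

theorem exists_eq_church {s : Bool} {t : Lam} (ht : NormalForm t) (h : PDer s [] t Npty) :
    ∃ n, t = church n := by
  have h' := h.of_all
  obtain ⟨t₁, rfl⟩ := exists_eq_lam_of_nil ht h'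
  obtain ⟨A, B, π, ht₁, hA, hB⟩ := h'.lam_arr_inv
  obtain ⟨b, Y, rfl⟩ := exists_eq_pv_of_substList_eq_pv hA.symm
  obtain ⟨n, rfl⟩ := exists_eq_lam_churchBody ht.of_lam ht₁ hA.symm hB.symm
  exact ⟨n, rfl⟩

/-- A normal λ-term has type `N = ∀X{X, (X→X) → X}` in system F iff it is a
Church numeral. -/
theorem normal_has_type_N_iff_church (t : Lam) (ht : NormalForm t) :
    PDer false [] t Npty ↔ ∃ n : ℕ, t = church n := by
  constructor
  · exact exists_eq_church ht
  · rintro ⟨n, rfl⟩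
    exact pDer_church false n
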